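/- Let ω be an infinite string over {b,c,d} with ω_{n-1} = d for some n ≥ 1. Then in the generalized Grigorchuk group 𝔾_ω, the element (a·d_k) satisfies (a·d_k)^{2^{n-k+1}} = 1 for every 0 ≤ k < n. -/

import Mathlib

/-- The automorphism `a` of the rooted binary tree `{0,1}*` flipping the first bit. -/
def aFun : List Bool → List Bool
  | [] => []
  | x :: s => (!x) :: s

lemma aFun_invol : Function.Involutive aFun := by
  intro s; cases s <;> simp [aFun]

def aPerm : Equiv.Perm (List Bool) := aFun_invol.toPerm

/-- The alphabet `{b, c, d}` of defining strings of generalized Grigorchuk groups. -/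
inductive GLetter : Type
  | b | c | d
deriving DecidableEq

/-- The action of the generator `x_n` of `𝔾_ω`: it fixes `1^m` and sends
`1^m 0 s` to itself if `ω_{n+m} = x`, and to `1^m 0 a(s)` otherwise. -/
def xFun (ω : ℕ → GLetter) (x : GLetter) : ℕ → List Bool → List Bool
  | _, [] => []
  | n, true :: s => true :: xFun ω x (n + 1) s
  | n, false :: s => false :: (if ω n = x then s else aFun s)

lemma xFun_invol (ω : ℕ → GLetter) (x : GLetter) (n : ℕ) :
    Function.Involutive (xFun ω x n) := by
  intro s
  induction s generalizing n with
  | nil => rfl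
  | cons hd t ih =>
    cases hd
    · by_cases h : ω n = x <;> simp [xFun, h, aFun_invol t]
    · simp [xFun, ih]

def xPerm (ω : ℕ → GLetter) (x : GLetter) (n : ℕ) : Equiv.Perm (List Bool) :=
  (xFun_invol ω x n).toPerm

/-- The generalized Grigorchuk group `𝔾_ω = ⟨a, b₀, c₀, d₀⟩`. -/
def Grig (ω : ℕ → GLetter) : Subgroup (Equiv.Perm (List Bool)) :=
  Subgroup.closure {aPerm, xPerm ω GLetter.b 0, xPerm ω GLetter.c 0, xPerm ω GLetter.d 0}

/-!
Since `a` swaps the two subtrees, `(a d_k)² = d_k^a d_k` has sections `(d_{k+1}, d_{k+1})`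
when `ω_k = d`, so then `(a d_k)⁴ = 1`; otherwise its sections are
`((a d_{k+1})⁻¹, a d_{k+1})`, so the order of `a d_k` divides twice that of `a d_{k+1}`.
Going down from the level `n - 1`, where `ω_{n-1} = d`, the order of `a d_k` divides
`2^{n-k+1}`.
-/

open Equiv

/-- The automorphism written `(p, q)` in wreath recursion: `p` below `0`, `q` below `1`. -/
def rootFixingHom : Perm (List Bool) × Perm (List Bool) →* Perm (List Bool) where
  toFun pq :=
    { toFun := fun
        | [] => []
        | false :: s => false :: pq.1 s
        | true :: s => true :: pq.2 s
      invFun := fun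
        | [] => []
        | false :: s => false :: pq.1.symm s
        | true :: s => true :: pq.2.symm s
      left_inv := by rintro (_ | ⟨_ | _, s⟩) <;> simp
      right_inv := by rintro (_ | ⟨_ | _, s⟩) <;> simp }
  map_one' := by ext (_ | ⟨_ | _, s⟩) <;> rfl
  map_mul' _ _ := by ext (_ | ⟨_ | _, s⟩) <;> rfl

lemma rootFixingHom_injective : Function.Injective rootFixingHom := by
  intro pq pq' h
  refine Prod.ext (Perm.ext fun s => ?_) (Perm.ext fun s => ?_)
  · exact (List.cons.inj (Perm.ext_iff.mp h (false :: s))).2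
  · exact (List.cons.inj (Perm.ext_iff.mp h (true :: s))).2

lemma xPerm_mul_self (ω : ℕ → GLetter) (x : GLetter) (n : ℕ) :
    xPerm ω x n * xPerm ω x n = 1 :=
  Perm.ext (xFun_invol ω x n)

section

variable {ω : ℕ → GLetter} {k : ℕ}

lemma aPerm_mul_xPerm_d_sq_of_eq (h : ω k = GLetter.d) :
    (aPerm * xPerm ω GLetter.d k) ^ 2 =
      rootFixingHom (xPerm ω GLetter.d (k + 1), xPerm ω GLetter.d (k + 1)) := by
  ext (_ | ⟨_ | _, s⟩) <;> simp [sq, aPerm, xPerm, rootFixingHom, xFun, aFun, h]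

lemma aPerm_mul_xPerm_d_sq_of_ne (h : ω k ≠ GLetter.d) :
    (aPerm * xPerm ω GLetter.d k) ^ 2 =
      rootFixingHom
        ((aPerm * xPerm ω GLetter.d (k + 1))⁻¹, aPerm * xPerm ω GLetter.d (k + 1)) := by
  ext (_ | ⟨_ | _, s⟩) <;> simp [sq, aPerm, xPerm, rootFixingHom, xFun, aFun, h]

lemma orderOf_aPerm_mul_xPerm_d_dvd_four (h : ω k = GLetter.d) :
    orderOf (aPerm * xPerm ω GLetter.d k) ∣ 4 := by
  refine orderOf_dvd_of_pow_eq_one ?_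
  rw [show 4 = 2 * 2 from rfl, pow_mul, aPerm_mul_xPerm_d_sq_of_eq h, sq, ← map_mul,
    Prod.mk_mul_mk, xPerm_mul_self, Prod.mk_one_one, map_one]

lemma orderOf_aPerm_mul_xPerm_d_dvd_two_mul (h : ω k ≠ GLetter.d) :
    orderOf (aPerm * xPerm ω GLetter.d k) ∣
      2 * orderOf (aPerm * xPerm ω GLetter.d (k + 1)) := by
  refine orderOf_dvd_of_pow_eq_one ?_
  rw [pow_mul, aPerm_mul_xPerm_d_sq_of_ne h, ← map_pow, Prod.pow_mk, inv_pow, pow_orderOf_eq_one,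
    inv_one, Prod.mk_one_one, map_one]

lemma orderOf_aPerm_mul_xPerm_d_dvd_two_pow (j : ℕ) (h : ω (k + j) = GLetter.d) :
    orderOf (aPerm * xPerm ω GLetter.d k) ∣ 2 ^ (j + 2) := by
  induction j generalizing k with
  | zero => exact orderOf_aPerm_mul_xPerm_d_dvd_four h
  | succ j ih =>
    by_cases hk : ω k = GLetter.d
    · exact (orderOf_aPerm_mul_xPerm_d_dvd_four hk).trans ⟨2 ^ (j + 1), by ring⟩
    · have hsucc := ih (k := k + 1) (by rwa [Nat.add_right_comm])
      calc _ ∣ 2 * orderOf (aPerm * xPerm ω GLetter.d (k + 1)) :=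
            orderOf_aPerm_mul_xPerm_d_dvd_two_mul hk
        _ ∣ 2 ^ (j + 1 + 2) := by rw [pow_succ' 2 (j + 2)]; exact mul_dvd_mul_left 2 hsucc

end

theorem stmt17_general (ω : ℕ → GLetter) (n : ℕ) (hω : ω (n - 1) = GLetter.d)
    (k : ℕ) (hk : k < n) :
    (aPerm * xPerm ω GLetter.d k) ^ (2 ^ (n - k + 1)) = 1 := by
  rw [← orderOf_dvd_iff_pow_eq_one, show n - k + 1 = n - 1 - k + 2 by omega]
  exact orderOf_aPerm_mul_xPerm_d_dvd_two_pow (n - 1 - k)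
    (by rwa [show k + (n - 1 - k) = n - 1 by omega])

/-- If `ω_{n-1} = d`, then `(a·d_k)^{2^{n-k+1}} = 1` for every `0 ≤ k < n`. -/
theorem stmt17 (ω : ℕ → GLetter) (n : ℕ) (hn : 1 ≤ n) (hω : ω (n - 1) = GLetter.d)
    (k : ℕ) (hk : k < n) :
    (aPerm * xPerm ω GLetter.d k) ^ (2 ^ (n - k + 1)) = 1 :=
  stmt17_general ω n hω k hk
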